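/- arXiv:2109.08629 — 2 statements merged into one kernel-verified Lean document; each statement's English description precedes it below -/
import Mathlib

section
/- Let n, r be natural numbers, g : ℤ, Q a symmetric r×r integer matrix, A an n×r integer matrix with all entries in {0,1}, b : Fin n → ℤ with entries in {0,1}, and j : Fin n. Define the operator S_j on functions f : (Fin n → ZMod 2) → ℂ by (S_j f)(y) = i^{(y j).val} · f(y). Let a_j : Fin r → ℤ be row j of A, viewed as a column vector. Then S_j ψ[g,Q,A,b] = ψ[g + 2·b_j, Q + (1 − 2·b_j) • (a_j * a_jᵀ), A, b], where a_j * a_jᵀ is the r×r outer-product matrix with (k,l) entry (a_j k)·(a_j l). -/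
open Matrix

/-- The integer lift of a `ZMod 2` vector: a bit vector. -/
def intify {r : ℕ} (v : Fin r → ZMod 2) : Fin r → ℤ := fun k => ((v k).val : ℤ)

/-- Entrywise reduction of an integer vector modulo 2. -/
def red₂ {n : ℕ} (x : Fin n → ℤ) : Fin n → ZMod 2 := fun j => (x j : ZMod 2)

/-- The indicator function (standard basis vector) of `v : Fin n → ZMod 2`. -/
def ind {n : ℕ} (v : Fin n → ZMod 2) : (Fin n → ZMod 2) → ℂ := fun y => if y = v then 1 else 0

/-- The eighth root of unity `τ = e^{iπ/4} = √i`. -/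
noncomputable def τ : ℂ := Complex.exp (Real.pi * Complex.I / 4)

/-- The quadratic form expansion `ψ[g,Q,A,b]`:
`(τ^g / √(2^m)) • ∑_{bit vectors x} i^{xᵀ Q x} • e_{red₂(A x + b)}`. -/
noncomputable def qfe (n m : ℕ) (g : ℤ) (Q : Matrix (Fin m) (Fin m) ℤ)
    (A : Matrix (Fin n) (Fin m) ℤ) (b : Fin n → ℤ) : (Fin n → ZMod 2) → ℂ :=
  (τ ^ g / (Real.sqrt (2 ^ m) : ℂ)) •
    ∑ v : Fin m → ZMod 2,
      (Complex.I ^ (intify v ⬝ᵥ Q.mulVec (intify v))) • ind (red₂ (A.mulVec (intify v) + b))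

lemma I_zpow_four : (Complex.I) ^ (4:ℤ) = 1 := by
  rw [show (4:ℤ) = ((4:ℕ):ℤ) from rfl, zpow_natCast]; norm_num

lemma I_zpow_congr {a b : ℤ} (h : a % 4 = b % 4) :
    Complex.I ^ a = Complex.I ^ b := by
  have key : ∀ z : ℤ, Complex.I ^ z = Complex.I ^ (z % 4) := by
    intro z
    conv_lhs => rw [show z = 4 * (z / 4) + z % 4 from (Int.mul_ediv_add_emod z 4).symm]
    rw [zpow_add₀ Complex.I_ne_zero, _root_.zpow_mul, I_zpow_four, _root_.one_zpow, one_mul]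
  rw [key a, key b, h]

lemma key_exp (s t : ℤ) (ht : t = 0 ∨ t = 1) :
    (Complex.I : ℂ) ^ (((s + t : ℤ) : ZMod 2).val) =
      Complex.I ^ t * Complex.I ^ ((1 - 2*t) * s^2) := by
  have hval : ((((s + t : ℤ) : ZMod 2)).val : ℤ) = (s + t) % 2 := ZMod.val_intCast _
  rw [← zpow_natCast, hval, ← zpow_add₀ Complex.I_ne_zero]
  apply I_zpow_congr
  rcases ht with rfl | rfl <;> rcases Int.even_or_odd s with ⟨k, rfl⟩ | ⟨k, rfl⟩
  · have h2 : (k + k)^2 = 4*(k*k) := by ring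
    rw [h2]; omega
  · have h2 : (2*k+1)^2 = 4*(k*k) + 4*k + 1 := by ring
    rw [h2]; omega
  · have h2 : (k + k)^2 = 4*(k*k) := by ring
    rw [h2]; omega
  · have h2 : (2*k+1)^2 = 4*(k*k) + 4*k + 1 := by ring
    rw [h2]; omega

lemma tau_sq : τ ^ (2:ℤ) = Complex.I := by
  rw [show (2:ℤ) = ((2:ℕ):ℤ) from rfl, zpow_natCast, τ, ← Complex.exp_nat_mul]
  rw [show (2:ℕ) * (Real.pi * Complex.I / 4) = (Real.pi/2 : ℝ) * Complex.I by push_cast; ring]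
  rw [Complex.exp_mul_I]
  simp

lemma dot_outer {r : ℕ} (a x : Fin r → ℤ) :
    x ⬝ᵥ (vecMulVec a a).mulVec x = (a ⬝ᵥ x) * (a ⬝ᵥ x) := by
  have h : (vecMulVec a a).mulVec x = fun k => a k * (a ⬝ᵥ x) := by
    funext k
    simp [Matrix.mulVec, Matrix.vecMulVec_apply, dotProduct, Finset.mul_sum, mul_assoc]
  rw [h]
  simp [dotProduct, Finset.sum_mul]
  ring_nf
  congr 1; funext k; ring

/-- The phase gate `S_j` transforms a quadratic form expansion by
`g ↦ g + 2 b_j` and `Q ↦ Q + (1 - 2 b_j)·(a_j a_jᵀ)`, where `a_j` is row `j` of `A`. -/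
theorem qfe_simulateS
    (n r : ℕ) (g : ℤ) (Q : Matrix (Fin r) (Fin r) ℤ) (hQ : Q.IsSymm)
    (A : Matrix (Fin n) (Fin r) ℤ) (hA : ∀ l c, A l c = 0 ∨ A l c = 1)
    (b : Fin n → ℤ) (hb : ∀ l, b l = 0 ∨ b l = 1)
    (j : Fin n) :
    (fun y => (Complex.I) ^ ((y j).val) * qfe n r g Q A b y)
      = qfe n r (g + 2 * b j)
          (Q + (1 - 2 * b j) • Matrix.vecMulVec (fun k => A j k) (fun k => A j k)) A b := by
  have hτ : τ ≠ 0 := Complex.exp_ne_zero _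
  have hC : τ ^ (g + 2 * b j) = τ ^ g * Complex.I ^ (b j) := by
    rw [zpow_add₀ hτ, _root_.zpow_mul, tau_sq]
  funext y
  simp only [qfe, Pi.smul_apply, Finset.sum_apply, smul_eq_mul, hC]
  rw [show Complex.I ^ ((y j).val) *
        (τ ^ g / (Real.sqrt (2 ^ r) : ℂ) *
          ∑ v : Fin r → ZMod 2,
            Complex.I ^ (intify v ⬝ᵥ Q.mulVec (intify v)) *
              ind (red₂ (A.mulVec (intify v) + b)) y)
      = τ ^ g / (Real.sqrt (2 ^ r) : ℂ) *
          (Complex.I ^ ((y j).val) *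
            ∑ v : Fin r → ZMod 2,
              Complex.I ^ (intify v ⬝ᵥ Q.mulVec (intify v)) *
                ind (red₂ (A.mulVec (intify v) + b)) y) by ring,
      show τ ^ g * Complex.I ^ (b j) / (Real.sqrt (2 ^ r) : ℂ) *
          ∑ v : Fin r → ZMod 2,
            Complex.I ^ (intify v ⬝ᵥ
                (Q + (1 - 2 * b j) • vecMulVec (fun k => A j k) (fun k => A j k)).mulVec
                  (intify v)) *
              ind (red₂ (A.mulVec (intify v) + b)) y
      = τ ^ g / (Real.sqrt (2 ^ r) : ℂ) *
          (Complex.I ^ (b j) *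
            ∑ v : Fin r → ZMod 2,
              Complex.I ^ (intify v ⬝ᵥ
                  (Q + (1 - 2 * b j) • vecMulVec (fun k => A j k) (fun k => A j k)).mulVec
                    (intify v)) *
                ind (red₂ (A.mulVec (intify v) + b)) y) by ring]
  congr 1
  rw [Finset.mul_sum, Finset.mul_sum]
  apply Finset.sum_congr rfl
  intro v _
  set a : Fin r → ℤ := fun k => A j k with ha
  have hq : intify v ⬝ᵥ (Q + (1 - 2 * b j) • vecMulVec a a).mulVec (intify v)
      = intify v ⬝ᵥ Q.mulVec (intify v) + (1 - 2 * b j) * ((a ⬝ᵥ intify v) ^ 2) := by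
    rw [Matrix.add_mulVec, dotProduct_add, Matrix.smul_mulVec, dotProduct_smul,
      smul_eq_mul, dot_outer, sq]
  rw [hq]
  unfold ind
  split_ifs with h
  · rw [mul_one, mul_one]
    have hyj : (y j) = (((A.mulVec (intify v) j + b j : ℤ)) : ZMod 2) := by
      rw [h]; rfl
    have hs : A.mulVec (intify v) j = a ⬝ᵥ intify v := rfl
    rw [hyj, hs, key_exp (a ⬝ᵥ intify v) (b j) (hb j), zpow_add₀ Complex.I_ne_zero]
    ring
  · rw [mul_zero, mul_zero, mul_zero, mul_zero]
end

section
/- Let n, r be natural numbers, g : ℤ, Q a symmetric r×r integer matrix, A an n×r integer matrix with all entries in {0,1}, b : Fin n → ℤ with entries in {0,1}, and j : Fin n. Define the Hadamard operator H_j on functions f : (Fin n → ZMod 2) → ℂ by (H_j f)(y) = (1/Real.sqrt 2) · ∑_{k∈{0,1}} (−1)^{(y j).val · k} · f(Function.update y j k). Let ã : Fin (r+1) → ℤ be row j of A extended by a final entry 0; let A'' be the n×(r+1) integer matrix whose first r columns are those of A except that row j is replaced by zero, and whose last column is the standard basis vector e_j; let b' equal b except that its j-th entry is 0; and let Q'' be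 the (r+1)×(r+1) matrix obtained by extending Q with a zero last row and column and adding e_{last} * ãᵀ + ã * e_{last}ᵀ + 2·b_j • (e_{last} * e_{last}ᵀ), where e_{last} : Fin (r+1) → ℤ is the last standard basis vector and v * wᵀ denotes the outer product. Then H_j ψ[g,Q,A,b] = ψ[g,Q'',A'',b'] (the right-hand side being a rank-(r+1) quadratic form expansion with normalisation 1/√(2^{r+1})). -/
open Matrix

/- ### Auxiliary lemmas -/

lemma sum_zmod2 {M : Type*} [AddCommMonoid M] (f : ZMod 2 → M) :
    ∑ k : ZMod 2, f k = f 0 + f 1 :=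
  Fin.sum_univ_two f

lemma zmod2_cases (a : ZMod 2) : a = 0 ∨ a = 1 := by revert a; decide

lemma intify_snoc {r : ℕ} (v : Fin r → ZMod 2) (k : ZMod 2) :
    intify (Fin.snoc v k) = Fin.snoc (intify v) ((k.val : ℤ)) := by
  funext l
  refine Fin.lastCases ?_ ?_ l <;> simp [intify]

lemma dot_vecMulVec {r : ℕ} (x u w : Fin r → ℤ) :
    x ⬝ᵥ (Matrix.vecMulVec u w).mulVec x = (x ⬝ᵥ u) * (w ⬝ᵥ x) := by
  simp only [dotProduct, mulVec, vecMulVec_apply, Finset.mul_sum, Finset.sum_mul]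
  rw [Finset.sum_comm]
  exact Finset.sum_congr rfl fun i _ => Finset.sum_congr rfl fun l _ => by ring

lemma neg_one_zpow_val (d : ℤ) :
    ((-1 : ℂ)) ^ d = ((-1 : ℂ)) ^ ((d : ZMod 2).val) := by
  rcases Int.even_or_odd d with h | h
  · rw [h.neg_one_zpow]
    have : (d : ZMod 2) = 0 := by
      rw [ZMod.intCast_zmod_eq_zero_iff_dvd]; exact h.two_dvd
    simp [this]
  · rw [h.neg_one_zpow]
    have : (d : ZMod 2) = 1 := by
      obtain ⟨m, rfl⟩ := h; push_cast
      rw [show ((2:ZMod 2)) = 0 from rfl]; ring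
    rw [this, ZMod.val_one]
    simp

lemma I_zpow_add_two (q d : ℤ) :
    Complex.I ^ (q + 2 * d) = Complex.I ^ q * ((-1 : ℂ)) ^ ((d : ZMod 2).val) := by
  rw [zpow_add₀ Complex.I_ne_zero, _root_.zpow_mul, show ((Complex.I) ^ (2:ℤ)) = -1 by
    rw [zpow_two, Complex.I_mul_I], neg_one_zpow_val]

/-- The computation of the extended quadratic form on `Fin.snoc x t`. -/
lemma qform_calc {n r : ℕ} (Q : Matrix (Fin r) (Fin r) ℤ) (A : Matrix (Fin n) (Fin r) ℤ)
    (b : Fin n → ℤ) (j : Fin n) (x : Fin r → ℤ) (t : ℤ) :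
    (Fin.snoc x t : Fin (r+1) → ℤ) ⬝ᵥ
      ((Matrix.of (Fin.snoc (fun k => (Fin.snoc (Q k) 0 : Fin (r+1) → ℤ)) (0 : Fin (r+1) → ℤ))
        + Matrix.vecMulVec (fun k => if k = Fin.last r then 1 else 0)
            (Fin.snoc (fun k => A j k) 0)
        + Matrix.vecMulVec (Fin.snoc (fun k => A j k) 0)
            (fun k => if k = Fin.last r then 1 else 0)
        + (2 * b j) • Matrix.vecMulVec (fun k => if k = Fin.last r then (1 : ℤ) else 0)
            (fun k => if k = Fin.last r then 1 else 0)).mulVec (Fin.snoc x t))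
    = x ⬝ᵥ Q.mulVec x + (t * (A.mulVec x j) + (A.mulVec x j) * t + 2 * b j * (t * t)) := by
  have he1 : (Fin.snoc x t : Fin (r+1) → ℤ) ⬝ᵥ (fun k => if k = Fin.last r then (1:ℤ) else 0) = t := by
    simp [dotProduct, Fin.sum_univ_castSucc, (Fin.castSucc_lt_last _).ne]
  have he2 : (fun k => if k = Fin.last r then (1:ℤ) else 0) ⬝ᵥ (Fin.snoc x t : Fin (r+1) → ℤ) = t := by
    rw [dotProduct_comm]; exact he1
  have ha1 : (Fin.snoc x t : Fin (r+1) → ℤ) ⬝ᵥ (Fin.snoc (fun k => A j k) 0 : Fin (r+1) → ℤ)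
      = A.mulVec x j := by
    simp [dotProduct, mulVec, Fin.sum_univ_castSucc, mul_comm]
  have ha2 : (Fin.snoc (fun k => A j k) 0 : Fin (r+1) → ℤ) ⬝ᵥ (Fin.snoc x t : Fin (r+1) → ℤ)
      = A.mulVec x j := by
    rw [dotProduct_comm]; exact ha1
  have h0 : (Fin.snoc x t : Fin (r+1) → ℤ) ⬝ᵥ
      ((Matrix.of (Fin.snoc (fun k => (Fin.snoc (Q k) 0 : Fin (r+1) → ℤ))
        (0 : Fin (r+1) → ℤ))).mulVec (Fin.snoc x t))
      = x ⬝ᵥ Q.mulVec x := by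
    simp [dotProduct, mulVec, Fin.sum_univ_castSucc]
  rw [add_mulVec, add_mulVec, add_mulVec, dotProduct_add, dotProduct_add, dotProduct_add,
    smul_mulVec, dotProduct_smul, dot_vecMulVec, dot_vecMulVec, dot_vecMulVec, h0, he1, he2, ha1, ha2,
    smul_eq_mul]
  ring

/-- The computation of the new residue vector. -/
lemma avec_calc {n r : ℕ} (A : Matrix (Fin n) (Fin r) ℤ) (b : Fin n → ℤ) (j : Fin n)
    (x : Fin r → ℤ) (t : ℤ) :
    red₂ ((Matrix.of fun l => Fin.snoc (fun c => if l = j then 0 else A l c)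
        (if l = j then 1 else 0)).mulVec (Fin.snoc x t) + Function.update b j 0)
    = Function.update (red₂ (A.mulVec x + b)) j ((t : ZMod 2)) := by
  funext l
  by_cases hl : l = j
  · subst hl
    simp [red₂, mulVec, dotProduct, Fin.sum_univ_castSucc]
  · simp [red₂, mulVec, dotProduct, Fin.sum_univ_castSucc, hl, Function.update_of_ne hl]

/-- The key per-`v` identity: summing over the Hadamard index `k`. -/
lemma key_sum {n : ℕ} (y z : Fin n → ZMod 2) (j : Fin n) (q dA bj : ℤ)
    (hd : ((dA + bj : ℤ) : ZMod 2) = z j) :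
    ∑ k : ZMod 2, ((-1 : ℂ)) ^ ((y j).val * k.val) *
        (Complex.I ^ q * (if Function.update y j k = z then 1 else 0))
    = ∑ k : ZMod 2, Complex.I ^ (q + (((k.val : ℤ)) * dA + dA * ((k.val : ℤ))
          + 2 * bj * (((k.val : ℤ)) * ((k.val : ℤ))))) *
        (if y = Function.update z j ((((k.val : ℤ)) : ZMod 2)) then 1 else 0) := by
  rw [sum_zmod2, sum_zmod2]
  have hexp0 : q + (((0:ZMod 2).val : ℤ) * dA + dA * ((0:ZMod 2).val : ℤ)
      + 2 * bj * (((0:ZMod 2).val : ℤ) * ((0:ZMod 2).val : ℤ))) = q := by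
    simp
  have hexp1 : q + (((1:ZMod 2).val : ℤ) * dA + dA * ((1:ZMod 2).val : ℤ)
      + 2 * bj * (((1:ZMod 2).val : ℤ) * ((1:ZMod 2).val : ℤ))) = q + 2 * (dA + bj) := by
    rw [ZMod.val_one]; push_cast; ring
  rw [hexp0, hexp1, I_zpow_add_two, hd]
  have hc0 : ((((0:ZMod 2).val : ℤ)) : ZMod 2) = 0 := by simp
  have hc1 : ((((1:ZMod 2).val : ℤ)) : ZMod 2) = 1 := by rw [ZMod.val_one]; simp
  rw [hc0, hc1]
  simp only [ZMod.val_zero, ZMod.val_one, mul_zero, mul_one, pow_zero, one_mul]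
  by_cases hoff : ∀ l, l ≠ j → y l = z l
  · have e1 : ∀ k : ZMod 2, (Function.update y j k = z) ↔ k = z j := by
      intro k
      rw [Function.update_eq_iff]
      exact and_iff_left hoff
    have e2 : ∀ k : ZMod 2, (y = Function.update z j k) ↔ y j = k := by
      intro k
      rw [Function.eq_update_iff]
      exact and_iff_left hoff
    rcases zmod2_cases (y j) with hy | hy <;> rcases zmod2_cases (z j) with hz | hz <;>
      simp [e1, e2, hy, hz, ZMod.val_zero, ZMod.val_one]
  · push_neg at hoff
    obtain ⟨l, hlj, hl⟩ := hoff
    have h1 : ∀ k : ZMod 2, Function.update y j k ≠ z := by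
      intro k h
      exact hl (by rw [← h, Function.update_of_ne hlj])
    have h2 : ∀ k : ZMod 2, y ≠ Function.update z j k := by
      intro k h
      exact hl (by rw [h, Function.update_of_ne hlj])
    simp [h1, h2]

/-- The Hadamard gate `H_j` maps a rank-`r` quadratic form expansion to a
rank-`(r+1)` quadratic form expansion: row `j` of `A` is zeroed out and a new column `e_j` is
adjoined, `b_j` is set to `0`, and `Q` is extended by a zero row/column and updated by
`+ e_last ãᵀ + ã e_lastᵀ + 2 b_j e_last e_lastᵀ`, where `ã` is row `j` of `A` extended by `0`. -/
theorem qfe_simulateH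
    (n r : ℕ) (g : ℤ) (Q : Matrix (Fin r) (Fin r) ℤ) (hQ : Q.IsSymm)
    (A : Matrix (Fin n) (Fin r) ℤ) (hA : ∀ l c, A l c = 0 ∨ A l c = 1)
    (b : Fin n → ℤ) (hb : ∀ l, b l = 0 ∨ b l = 1)
    (j : Fin n) :
    (fun y => (1 / (Real.sqrt 2 : ℂ)) *
        ∑ k : ZMod 2, ((-1 : ℂ)) ^ ((y j).val * k.val) *
          qfe n r g Q A b (Function.update y j k))
      = qfe n (r + 1) g
          -- Q'' : extend Q by a zero last row and column, then add the rank-one updates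
          (Matrix.of (Fin.snoc (fun k => (Fin.snoc (Q k) 0 : Fin (r+1) → ℤ)) (0 : Fin (r+1) → ℤ))
            + Matrix.vecMulVec (fun k => if k = Fin.last r then 1 else 0)
                (Fin.snoc (fun k => A j k) 0)
            + Matrix.vecMulVec (Fin.snoc (fun k => A j k) 0)
                (fun k => if k = Fin.last r then 1 else 0)
            + (2 * b j) • Matrix.vecMulVec (fun k => if k = Fin.last r then (1 : ℤ) else 0)
                (fun k => if k = Fin.last r then 1 else 0))
          -- A'' : first r columns of A with row j zeroed, last column e_j
          (Matrix.of fun l => Fin.snoc (fun c => if l = j then 0 else A l c)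
              (if l = j then 1 else 0))
          -- b' : b with entry j set to 0
          (Function.update b j 0) := by
  funext y
  simp only [qfe, Pi.smul_apply, Finset.sum_apply, smul_eq_mul, ind]
  -- reindex the RHS sum over `Fin (r+1) → ZMod 2` as a double sum
  rw [← Equiv.sum_comp (Fin.snocEquiv (fun _ : Fin (r+1) => ZMod 2))
    (fun w => Complex.I ^ (intify w ⬝ᵥ _) * _), Fintype.sum_prod_type]
  have hsnoc : ∀ (k : ZMod 2) (v : Fin r → ZMod 2),
      (Fin.snocEquiv (fun _ : Fin (r+1) => ZMod 2)) (k, v) = Fin.snoc v k := fun _ _ => rfl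
  simp only [hsnoc, intify_snoc, qform_calc, avec_calc]
  rw [Finset.sum_comm]
  have hconst : (1 / (Real.sqrt 2 : ℂ)) * (τ ^ g / (Real.sqrt (2 ^ r) : ℂ))
      = τ ^ g / (Real.sqrt (2 ^ (r + 1)) : ℂ) := by
    rw [div_mul_div_comm, one_mul]
    congr 1
    rw [← Complex.ofReal_mul, ← Real.sqrt_mul (by norm_num : (0:ℝ) ≤ 2), pow_succ, mul_comm]
  have step : ∀ k : ZMod 2, ((-1 : ℂ)) ^ ((y j).val * k.val) *
        ((τ ^ g / (Real.sqrt (2 ^ r) : ℂ)) * ∑ v : Fin r → ZMod 2,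
          Complex.I ^ (intify v ⬝ᵥ Q.mulVec (intify v)) *
            (if Function.update y j k = red₂ (A.mulVec (intify v) + b) then 1 else 0))
      = (τ ^ g / (Real.sqrt (2 ^ r) : ℂ)) * ∑ v : Fin r → ZMod 2,
          ((-1 : ℂ)) ^ ((y j).val * k.val) *
          (Complex.I ^ (intify v ⬝ᵥ Q.mulVec (intify v)) *
            (if Function.update y j k = red₂ (A.mulVec (intify v) + b) then 1 else 0)) := by
    intro k
    rw [← Finset.mul_sum, mul_left_comm]
  rw [Finset.sum_congr rfl fun k _ => step k, ← Finset.mul_sum, ← mul_assoc, hconst,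
    Finset.sum_comm]
  congr 1
  refine Finset.sum_congr rfl fun v _ => ?_
  exact key_sum y (red₂ (A.mulVec (intify v) + b)) j (intify v ⬝ᵥ Q.mulVec (intify v))
    (A.mulVec (intify v) j) (b j) rfl
end
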